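/- arXiv:2012.06922 — 2 statements merged into one kernel-verified Lean document; each statement's English description precedes it below -/
import Mathlib

section
/- Conversely, let {u_ℓ}_{ℓ=1}^N be an orthonormal basis of ℂ^N and a, b^{(1)},…,b^{(r)} real-valued functions on {1,…,N}. If for all f ∈ ℂ^N one has ‖f‖² = Σ_u |⟨f, φ_u⟩|² + Σ_{n,u} |⟨f, ψ^{(n)}_u⟩|² with φ_u, ψ^{(n)}_u the filtered kernels as above, then |a(ℓ)|² + Σ_{n=1}^r |b^{(n)}(ℓ)|² = 1 for every ℓ = 1,…,N. -/
/-!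
Testing the tight-frame identity against the basis vector `f = u_ℓ` isolates `ℓ`: by
orthonormality, `⟨u_ℓ, φ_u⟩ = a(ℓ) u_ℓ(u)` and `⟨u_ℓ, ψ^{(n)}_u⟩ = b^{(n)}(ℓ) u_ℓ(u)`, so summing
the squared moduli over `u` leaves `a(ℓ)² + Σₙ b^{(n)}(ℓ)²` on the right and `‖u_ℓ‖² = 1` on the left.
-/

open Finset ComplexConjugate

variable {ι : Type*} [Fintype ι]

/-- With `u_ℓ = uB ℓ`, the paper's `φ_u(v)` is `filteredKernel uB a u v`. -/
noncomputable def filteredKernel (uB : ι → ι → ℂ) (c : ι → ℂ) (u v : ι) : ℂ :=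
  ∑ ℓ, c ℓ * conj (uB ℓ u) * uB ℓ v

section Orthonormal

variable [DecidableEq ι] {uB : ι → ι → ℂ}

theorem sum_norm_sq_eq_one_of_orthonormal
    (horth : ∀ ℓ ℓ', ∑ v, uB ℓ v * conj (uB ℓ' v) = if ℓ = ℓ' then 1 else 0)
    (ℓ : ι) : ∑ v, ‖uB ℓ v‖ ^ 2 = 1 := by
  have h := horth ℓ ℓ
  rw [if_pos rfl] at h
  simp only [Complex.mul_conj'] at h
  exact_mod_cast h

theorem sum_mul_conj_filteredKernel
    (horth : ∀ ℓ ℓ', ∑ v, uB ℓ v * conj (uB ℓ' v) = if ℓ = ℓ' then 1 else 0)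
    (c : ι → ℂ) (ℓ u : ι) :
    ∑ v, uB ℓ v * conj (filteredKernel uB c u v) = conj (c ℓ) * uB ℓ u := by
  calc ∑ v, uB ℓ v * conj (filteredKernel uB c u v)
      = ∑ ℓ', conj (c ℓ') * uB ℓ' u * ∑ v, uB ℓ v * conj (uB ℓ' v) := by
        simp only [filteredKernel, map_sum, map_mul, Complex.conj_conj, mul_sum]
        rw [sum_comm]
        exact sum_congr rfl fun _ _ => sum_congr rfl fun _ _ => by ring
    _ = conj (c ℓ) * uB ℓ u := by simp [horth]

theorem sum_norm_sq_sum_mul_conj_filteredKernel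
    (horth : ∀ ℓ ℓ', ∑ v, uB ℓ v * conj (uB ℓ' v) = if ℓ = ℓ' then 1 else 0)
    (c : ι → ℂ) (ℓ : ι) :
    ∑ u, ‖∑ v, uB ℓ v * conj (filteredKernel uB c u v)‖ ^ 2 = ‖c ℓ‖ ^ 2 := by
  simp only [sum_mul_conj_filteredKernel horth, norm_mul, Complex.norm_conj, mul_pow, ← mul_sum,
    sum_norm_sq_eq_one_of_orthonormal horth, mul_one]

end Orthonormal

/-- Converse of the one-level tightness: if the filtered-kernel framelet system built
from real filter values `a, b^{(1)},…,b^{(r)}` and an orthonormal basis `{u_ℓ}` of `ℂ^N`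
is a tight frame, then `|a ℓ|² + ∑ n, |b n ℓ|² = 1` for every `ℓ`. -/
theorem filter_identity_of_framelet_tight_frame
    (N r : ℕ) (uB : Fin N → Fin N → ℂ)
    (horth : ∀ ℓ ℓ' : Fin N,
      ∑ v, uB ℓ v * (starRingEnd ℂ) (uB ℓ' v) = if ℓ = ℓ' then 1 else 0)
    (a : Fin N → ℝ) (b : Fin r → Fin N → ℝ)
    (φ : Fin N → Fin N → ℂ)
    (hφ : ∀ u v, φ u v = ∑ ℓ, (a ℓ : ℂ) * (starRingEnd ℂ) (uB ℓ u) * uB ℓ v)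
    (ψ : Fin r → Fin N → Fin N → ℂ)
    (hψ : ∀ n u v, ψ n u v = ∑ ℓ, (b n ℓ : ℂ) * (starRingEnd ℂ) (uB ℓ u) * uB ℓ v)
    (htight : ∀ f : Fin N → ℂ,
      ∑ v, ‖f v‖ ^ 2
        = (∑ u, ‖∑ v, f v * (starRingEnd ℂ) (φ u v)‖ ^ 2)
          + ∑ n, ∑ u, ‖∑ v, f v * (starRingEnd ℂ) (ψ n u v)‖ ^ 2) :
    ∀ ℓ : Fin N, (a ℓ) ^ 2 + ∑ n, (b n ℓ) ^ 2 = 1 := by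
  intro ℓ
  have hφK : φ = filteredKernel uB (fun ℓ => a ℓ) := funext₂ hφ
  have hψK : ∀ n, ψ n = filteredKernel uB (fun ℓ => b n ℓ) := fun n => funext₂ (hψ n)
  have h := htight (uB ℓ)
  simp only [hφK, hψK, sum_norm_sq_sum_mul_conj_filteredKernel horth,
    sum_norm_sq_eq_one_of_orthonormal horth, Complex.norm_real, Real.norm_eq_abs, sq_abs] at h
  exact h.symm
end

section
/- Let m ≥ 1 and define P_m(x) = ((1+x)/2)^m · Σ_{k=0}^{m−1} C(m−1+k, k) ((1−x)/2)^k. Then P_m(x) + P_m(−x) = 1 for all real x. -/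
open Finset

private lemma expand_sum (n : ℕ) (x : ℝ) :
    ∑ k ∈ range (n+2), (Nat.choose (n+1+k) k : ℝ) * x ^ k
      = (∑ k ∈ range (n+2), (Nat.choose (n+k) k : ℝ) * x ^ k)
        + ∑ k ∈ range (n+1), (Nat.choose (n+1+k) k : ℝ) * x ^ (k+1) := by
  rw [Finset.sum_range_succ' (fun k => (Nat.choose (n+1+k) k : ℝ) * x ^ k) (n+1),
      Finset.sum_range_succ' (fun k => (Nat.choose (n+k) k : ℝ) * x ^ k) (n+1)]
  have hterm : ∀ i ∈ range (n+1), (Nat.choose (n+1+(i+1)) (i+1) : ℝ) * x ^ (i+1)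
      = (Nat.choose (n+(i+1)) (i+1) : ℝ) * x ^ (i+1)
        + (Nat.choose (n+1+i) i : ℝ) * x ^ (i+1) := by
    intro i _
    have h : (n+1+(i+1)) = (n+i+1) + 1 := by ring
    rw [h, Nat.choose_succ_succ]
    push_cast
    have h2 : n + (i+1) = n + i + 1 := by ring
    have h3 : n + 1 + i = n + i + 1 := by ring
    rw [h2, h3]
    ring
  rw [Finset.sum_congr rfl hterm, Finset.sum_add_distrib]
  norm_num
  ring

private lemma key_step (n : ℕ) (a b : ℝ) (hab : a + b = 1) :
    a * ∑ k ∈ range (n+2), (Nat.choose (n+1+k) k : ℝ) * b ^ k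
      = (∑ k ∈ range (n+1), (Nat.choose (n+k) k : ℝ) * b ^ k)
        + (Nat.choose (2*n+1) (n+1) : ℝ) * b ^ (n+1)
        - (Nat.choose (2*n+2) (n+1) : ℝ) * b ^ (n+2) := by
  have h1 := expand_sum n b
  have h2 : ∑ k ∈ range (n+2), (Nat.choose (n+k) k : ℝ) * b ^ k
      = (∑ k ∈ range (n+1), (Nat.choose (n+k) k : ℝ) * b ^ k)
        + (Nat.choose (2*n+1) (n+1) : ℝ) * b ^ (n+1) := by
    rw [Finset.sum_range_succ, show n + (n+1) = 2*n+1 from by ring]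
  have h3 : b * ∑ k ∈ range (n+1), (Nat.choose (n+1+k) k : ℝ) * b ^ k
      = ∑ k ∈ range (n+1), (Nat.choose (n+1+k) k : ℝ) * b ^ (k+1) := by
    rw [Finset.mul_sum]
    exact Finset.sum_congr rfl (fun k _ => by ring)
  have h4 : ∑ k ∈ range (n+2), (Nat.choose (n+1+k) k : ℝ) * b ^ k
      = (∑ k ∈ range (n+1), (Nat.choose (n+1+k) k : ℝ) * b ^ k)
        + (Nat.choose (2*n+2) (n+1) : ℝ) * b ^ (n+1) := by
    rw [Finset.sum_range_succ, show n + 1 + (n+1) = 2*n+2 from by ring]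
  have ha : a = 1 - b := by linarith
  rw [ha]
  linear_combination h1 + h2 - h3 - b * h4

private lemma central (n : ℕ) :
    (Nat.choose (2*n+2) (n+1) : ℝ) = 2 * (Nat.choose (2*n+1) (n+1) : ℝ) := by
  have h : (2*n+2).choose (n+1) = (2*n+1).choose n + (2*n+1).choose (n+1) := by
    rw [show 2*n+2 = (2*n+1)+1 from by ring, Nat.choose_succ_succ]
  have hsym : (2*n+1).choose n = (2*n+1).choose (n+1) := by
    have := Nat.choose_symm (show n+1 ≤ 2*n+1 by omega) (n := 2*n+1)
    rw [show 2*n+1-(n+1) = n by omega] at this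
    omega
  rw [h, hsym]
  push_cast
  ring

private lemma main_lemma (n : ℕ) (a b : ℝ) (hab : a + b = 1) :
    a ^ (n+1) * (∑ k ∈ range (n+1), (Nat.choose (n+k) k : ℝ) * b ^ k)
      + b ^ (n+1) * (∑ k ∈ range (n+1), (Nat.choose (n+k) k : ℝ) * a ^ k) = 1 := by
  induction n with
  | zero => simp; linarith
  | succ n ih =>
    have hA := key_step n a b hab
    have hB := key_step n b a (by linarith)
    have hc := central n
    have e1 : a ^ (n+2) * (∑ k ∈ range (n+2), (Nat.choose (n+1+k) k : ℝ) * b ^ k)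
        = a ^ (n+1) * (a * ∑ k ∈ range (n+2), (Nat.choose (n+1+k) k : ℝ) * b ^ k) := by ring
    have e2 : b ^ (n+2) * (∑ k ∈ range (n+2), (Nat.choose (n+1+k) k : ℝ) * a ^ k)
        = b ^ (n+1) * (b * ∑ k ∈ range (n+2), (Nat.choose (n+1+k) k : ℝ) * a ^ k) := by ring
    rw [e1, e2, hA, hB]
    linear_combination ih - (a*b)^(n+1)*(a+b)*hc
      - 2*((Nat.choose (2*n+1) (n+1) : ℝ))*(a*b)^(n+1)*hab

/-- The Daubechies polynomial
`P_m(x) = ((1+x)/2)^m ∑_{k=0}^{m-1} C(m-1+k, k) ((1-x)/2)^k` satisfies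
`P_m(x) + P_m(-x) = 1` for every `m ≥ 1` and every real `x`. -/
theorem daubechies_polynomial_identity (m : ℕ) (hm : 1 ≤ m) (x : ℝ) :
    (((1 + x) / 2) ^ m * ∑ k ∈ Finset.range m, (Nat.choose (m - 1 + k) k : ℝ) * ((1 - x) / 2) ^ k)
      + (((1 + -x) / 2) ^ m *
          ∑ k ∈ Finset.range m, (Nat.choose (m - 1 + k) k : ℝ) * ((1 - -x) / 2) ^ k) = 1 := by
  obtain ⟨n, rfl⟩ := Nat.exists_eq_add_of_le hm
  have h1 : (1 + -x)/2 = (1-x)/2 := by ring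
  have h2 : (1 - -x)/2 = (1+x)/2 := by ring
  rw [h1, h2, show 1 + n = n + 1 from by ring, show n + 1 - 1 = n from by omega]
  exact main_lemma n ((1+x)/2) ((1-x)/2) (by ring)
end
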